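/- arXiv:2303.11808 — 5 statements merged into one kernel-verified Lean document; each statement's English description precedes it below -/
import Mathlib

section
/- Let q = p^d be a prime power and let S be a subgroup of order n > 1 of the multiplicative group of the finite field F_q. Then S generates the additive group of F_q if and only if the multiplicative order of p modulo n equals d. -/
/-!
Let `e` be the order of `p` modulo `n`. The additive closure of `S` is the subring `R` it
generates, a finite field with `p ^ m` elements. Since `S` is cyclic of order `n`, the power
`x ↦ x ^ p ^ k` of Frobenius fixes `S` iff `n ∣ p ^ k - 1`, i.e. iff `e ∣ k`. Hence `e ∣ m`,
because `x ^ p ^ m = x` on `R`; conversely the `e`-th power of Frobenius fixes `S`, hence the whole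
of `R`, so the cyclic group `Rˣ` of order `p ^ m - 1` has exponent dividing `p ^ e - 1`, and
`m ≤ e`. Thus `R` has `p ^ e` elements and is all of `F` iff `e = d`.
-/

theorem Monoid.exponent_dvd_sub_one_iff_forall_pow_eq_self {G : Type*} [RightCancelMonoid G]
    {m : ℕ} (hm : 0 < m) :
    Monoid.exponent G ∣ m - 1 ↔ ∀ g : G, g ^ m = g := by
  rw [Monoid.exponent_dvd_iff_forall_pow_eq_one]
  refine forall_congr' fun g => ?_
  rw [← mul_left_inj g, ← pow_succ, Nat.sub_add_cancel hm, one_mul]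

theorem Subgroup.card_dvd_sub_one_iff_forall_pow_eq_self {R : Type*} [CommRing R] [IsDomain R]
    (S : Subgroup Rˣ) [Finite S] {m : ℕ} (hm : 0 < m) :
    Nat.card S ∣ m - 1 ↔ ∀ s ∈ S, (s : R) ^ m = s := by
  rw [← IsCyclic.exponent_eq_card, Monoid.exponent_dvd_sub_one_iff_forall_pow_eq_self hm]
  simp [Subtype.ext_iff, Units.ext_iff]

theorem FiniteField.card_sub_one_dvd_iff_forall_pow_eq_self {K : Type*} [Field K] [Finite K]
    {m : ℕ} (hm : 0 < m) :
    Nat.card K - 1 ∣ m - 1 ↔ ∀ x : K, x ^ m = x := by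
  rw [← Nat.card_units, ← IsCyclic.exponent_eq_card,
    Monoid.exponent_dvd_sub_one_iff_forall_pow_eq_self hm]
  refine ⟨fun h x => ?_, fun h u => Units.ext (by simpa using h u)⟩
  rcases eq_or_ne x 0 with rfl | hx
  · exact zero_pow hm.ne'
  · simpa using congrArg Units.val (h (Units.mk0 x hx))

theorem ZMod.natCast_pow_eq_one_iff {n p k : ℕ} (hp : 0 < p) :
    (p : ZMod n) ^ k = 1 ↔ n ∣ p ^ k - 1 := by
  rw [← Nat.cast_pow, ← Nat.cast_one, ZMod.natCast_eq_natCast_iff, Nat.ModEq.comm,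
    Nat.modEq_iff_dvd' (Nat.one_le_pow _ _ hp)]

theorem Subgroup.orderOf_natCast_dvd_iff_forall_pow_pow_eq_self {R : Type*} [CommRing R]
    [IsDomain R] (S : Subgroup Rˣ) [Finite S] {p : ℕ} (hp : 0 < p) (k : ℕ) :
    orderOf (p : ZMod (Nat.card S)) ∣ k ↔ ∀ s ∈ S, (s : R) ^ p ^ k = s := by
  rw [orderOf_dvd_iff_pow_eq_one, ZMod.natCast_pow_eq_one_iff hp,
    S.card_dvd_sub_one_iff_forall_pow_eq_self (pow_pos hp k)]

theorem Subring.closure_toAddSubgroup_of_submonoid {R : Type*} [Ring R] (M : Submonoid R) :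
    (Subring.closure (M : Set R)).toAddSubgroup = AddSubgroup.closure M := by
  ext x
  rw [Subring.mem_toAddSubgroup, Subring.mem_closure_iff, Submonoid.closure_eq]

theorem FiniteField.card_subring_closure_units_subgroup {F : Type*} [Field F] [Finite F]
    {p : ℕ} [Fact p.Prime] [CharP F p] (S : Subgroup Fˣ) :
    Nat.card (Subring.closure ((fun u : Fˣ => (u : F)) '' (S : Set Fˣ))) =
      p ^ orderOf (p : ZMod (Nat.card S)) := by
  classical
  have := Fintype.ofFinite F
  set R := Subring.closure ((fun u : Fˣ => (u : F)) '' (S : Set Fˣ))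
  set e := orderOf (p : ZMod (Nat.card S))
  have hp1 : 1 < p := (Fact.out : p.Prime).one_lt
  have hp : 0 < p := hp1.pos
  have hSR : ∀ s ∈ S, (s : F) ∈ R := fun s hs => Subring.subset_closure ⟨s, hs, rfl⟩
  let : Field R := Fintype.fieldOfDomain R
  obtain ⟨m, -, hRm⟩ := FiniteField.card R p
  rw [← Nat.card_eq_fintype_card] at hRm
  have he_dvd_m : e ∣ m := by
    refine (S.orderOf_natCast_dvd_iff_forall_pow_pow_eq_self hp m).2 fun s hs => ?_
    simpa [← hRm] using congrArg Subtype.val (FiniteField.pow_card (⟨s, hSR s hs⟩ : R))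
  have he_pos : 0 < e := Nat.pos_of_dvd_of_pos he_dvd_m m.pos
  have hR_fixed : R ≤ RingHom.eqLocus (iterateFrobenius F p e) (RingHom.id F) := by
    rw [Subring.closure_le]
    rintro _ ⟨s, hs, rfl⟩
    exact (S.orderOf_natCast_dvd_iff_forall_pow_pow_eq_self hp e).1 dvd_rfl s hs
  have hm_le_e : (m : ℕ) ≤ e := by
    have hdvd : p ^ (m : ℕ) - 1 ∣ p ^ e - 1 :=
      hRm ▸ (FiniteField.card_sub_one_dvd_iff_forall_pow_eq_self (pow_pos hp e)).2
        fun x => Subtype.ext (hR_fixed x.2)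
    have hle := Nat.le_of_dvd (Nat.sub_pos_of_lt (Nat.one_lt_pow he_pos.ne' hp1)) hdvd
    rw [tsub_le_tsub_iff_right (Nat.one_le_pow e p hp)] at hle
    exact (Nat.pow_le_pow_iff_right hp1).1 hle
  rw [hRm, le_antisymm hm_le_e (Nat.le_of_dvd m.pos he_dvd_m)]

theorem stmt0_general (p d n : ℕ) (hp : p.Prime)
    (F : Type*) [Field F] [Fintype F] (hF : Fintype.card F = p ^ d)
    (S : Subgroup Fˣ) (hn : Nat.card S = n) :
    AddSubgroup.closure ((fun u : Fˣ => (u : F)) '' (S : Set Fˣ)) = ⊤ ↔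
      orderOf (p : ZMod n) = d := by
  have := Fact.mk hp
  have := charP_of_card_eq_prime_pow hF
  have hT : (fun u : Fˣ => (u : F)) '' S = (S.toSubmonoid.map (Units.coeHom F) : Set F) := rfl
  rw [← AddSubgroup.card_eq_iff_eq_top, hT, ← Subring.closure_toAddSubgroup_of_submonoid,
    ← hT]
  change Nat.card (Subring.closure _) = _ ↔ _
  rw [FiniteField.card_subring_closure_units_subgroup, hn, Nat.card_eq_fintype_card, hF,
    (Nat.pow_right_injective hp.two_le).eq_iff]

/-- Let `q = p^d` be a prime power and `S` a subgroup of order `n > 1` of the multiplicative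
group of the finite field `F_q`. Then `S` generates the additive group of `F_q` if and only if
the multiplicative order of `p` modulo `n` equals `d`. -/
theorem stmt0 (p d n : ℕ) (hp : p.Prime) (hd : 0 < d)
    (F : Type*) [Field F] [Fintype F] (hF : Fintype.card F = p ^ d)
    (S : Subgroup Fˣ) (hn : Nat.card S = n) (hn1 : 1 < n) :
    AddSubgroup.closure ((fun u : Fˣ => (u : F)) '' (S : Set Fˣ)) = ⊤ ↔
      orderOf (p : ZMod n) = d :=
  stmt0_general p d n hp F hF S hn
end

section
/- Let n ≥ 1 and p be coprime to n, and write n = ∏ r^{e_r} over primes r. For each odd prime r dividing n let d_r be the multiplicative order of p modulo r^{e_r}. Then there exists an integer i with p^i ≡ -1 (mod n) if and only if: (i) the orders d_r for odd primes r dividing n are all even and all have the same 2-part 2^k ≥ 2; (ii) if 4 does not divide n but 2 divides n, then p ≡ -1 (mod 2); (iii) if 4 divides n, then p ≡ -1 (mod 2^{e_2}) and k = 1. Moreover when these conditions hold, i = lcm{ d_r / 2 : r odd prime dividing n } works if n has an odd prime divisor, and i = 1 works otherwise. -/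
/-!
By the Chinese remainder theorem, `p ^ i ≡ -1 (mod n)` is a condition at each prime power
`r ^ e ∥ n`. For odd `r` the only square roots of `1` modulo `r ^ e` are `±1`, so
`p ^ i ≡ -1 (mod r ^ e)` iff `d_r ∣ 2 i` and `d_r ∤ i`, which forces `v₂(d_r) = v₂(i) + 1`.
Modulo `2 ^ e` with `e ≥ 2`, `-1` is not a square mod `4` and the units have `2`-power order,
so `p ^ i ≡ -1` iff `p ≡ -1` and `i` is odd. Conversely, if all `v₂(d_r)` equal `k ≥ 1`, the lcm
of the `d_r / 2` has `2`-adic valuation `k - 1` and meets every local condition.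
-/

namespace Nat

theorem dvd_iff_forall_ordProj_dvd {n m : ℕ} (hn : n ≠ 0) :
    n ∣ m ↔ ∀ r ∈ n.primeFactors, r ^ n.factorization r ∣ m := by
  refine ⟨fun h r _ => (ordProj_dvd n r).trans h, fun h => ?_⟩
  rcases eq_or_ne m 0 with rfl | hm
  · exact dvd_zero n
  rw [← factorization_prime_le_iff_dvd hn hm]
  intro q hq
  by_cases hqn : q ∈ n.primeFactors
  · exact (hq.pow_dvd_iff_le_factorization hm).1 (h q hqn)
  · rw [← support_factorization, Finsupp.notMem_support_iff] at hqn
    simp [hqn]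

theorem factorization_two_eq_succ_of_dvd_two_mul_of_not_dvd {d i : ℕ} (h : d ∣ 2 * i)
    (h' : ¬ d ∣ i) : d.factorization 2 = i.factorization 2 + 1 := by
  have hi : i ≠ 0 := by rintro rfl; exact h' (dvd_zero d)
  have hd : d ≠ 0 := by rintro rfl; simp_all
  have hfac (q : ℕ) : d.factorization q ≤ Finsupp.single 2 1 q + i.factorization q := by
    simpa [factorization_mul two_ne_zero hi, prime_two.factorization] using
      (factorization_le_iff_dvd hd (by positivity)).2 h q
  have hlt : i.factorization 2 < d.factorization 2 := by
    by_contra hge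
    refine h' ((factorization_prime_le_iff_dvd hd hi).1 fun q _ => ?_)
    rcases eq_or_ne q 2 with rfl | hq
    · omega
    · simpa [Finsupp.single_eq_of_ne hq] using hfac q
  have := hfac 2
  rw [Finsupp.single_eq_same] at this
  omega

theorem not_dvd_of_factorization_lt {d i q : ℕ} (hi : i ≠ 0)
    (h : i.factorization q < d.factorization q) : ¬ d ∣ i := fun hdi =>
  h.not_ge ((factorization_le_iff_dvd (by rintro rfl; simp_all) hi).2 hdi q)

theorem mem_primeFactors_filter_ne_two {n r : ℕ} (hn : n ≠ 0) :
    r ∈ n.primeFactors.filter (· ≠ 2) ↔ r.Prime ∧ Odd r ∧ r ∣ n := by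
  simp only [Finset.mem_filter, Nat.mem_primeFactors, and_iff_left hn]
  constructor
  · rintro ⟨⟨hr, hrn⟩, hr2⟩
    exact ⟨hr, hr.odd_of_ne_two hr2, hrn⟩
  · rintro ⟨hr, hodd, hrn⟩
    exact ⟨⟨hr, hrn⟩, by rintro rfl; exact absurd hodd (by decide)⟩

theorem four_dvd_iff_two_le_factorization {n : ℕ} (hn : n ≠ 0) : 4 ∣ n ↔ 2 ≤ n.factorization 2 :=
  Nat.prime_two.pow_dvd_iff_le_factorization (k := 2) hn

end Nat

theorem Finset.factorization_lcm_of_forall_eq {ι : Type*} {s : Finset ι} {f : ι → ℕ}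
    (hs : s.Nonempty) (hf : ∀ r ∈ s, f r ≠ 0) {q m : ℕ}
    (hm : ∀ r ∈ s, (f r).factorization q = m) : (s.lcm f).factorization q = m := by
  rw [Finset.factorization_lcm hf, Finset.sup_congr rfl hm, Finset.sup_const hs]

theorem ZMod.natCast_eq_neg_one_iff_dvd (a m : ℕ) : (a : ZMod m) = -1 ↔ m ∣ a + 1 := by
  rw [← ZMod.natCast_eq_zero_iff, Nat.cast_add, Nat.cast_one, eq_neg_iff_add_eq_zero]

theorem ZMod.natCast_eq_neg_one_iff_forall_primeFactors {n : ℕ} (hn : n ≠ 0) (a : ℕ) :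
    (a : ZMod n) = -1 ↔ ∀ r ∈ n.primeFactors, (a : ZMod (r ^ n.factorization r)) = -1 := by
  simp only [ZMod.natCast_eq_neg_one_iff_dvd, Nat.dvd_iff_forall_ordProj_dvd hn]

theorem ZMod.eq_one_or_eq_neg_one_of_sq_eq_one {r e : ℕ} (hr : r.Prime) (hr2 : r ≠ 2)
    {y : ZMod (r ^ e)} (hy : y ^ 2 = 1) : y = 1 ∨ y = -1 := by
  obtain ⟨a, rfl⟩ := ZMod.intCast_surjective y
  have hdvd : (r : ℤ) ^ e ∣ (a - 1) * (a + 1) := by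
    have : (((a - 1) * (a + 1) : ℤ) : ZMod (r ^ e)) = 0 := by
      push_cast; linear_combination hy
    exact_mod_cast (ZMod.intCast_zmod_eq_zero_iff_dvd _ _).1 this
  have hrp : Prime (r : ℤ) := Nat.prime_iff_prime_int.mp hr
  have hnot : ¬ (r : ℤ) ∣ a - 1 ∨ ¬ (r : ℤ) ∣ a + 1 := by
    rw [← not_and_or]
    rintro ⟨h₁, h₂⟩
    have : (r : ℤ) ∣ (2 : ℕ) := by simpa using dvd_sub h₂ h₁
    exact hr2 ((Nat.prime_dvd_prime_iff_eq hr Nat.prime_two).1 (Int.natCast_dvd_natCast.1 this))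
  rcases hnot with h | h
  · right
    have := (ZMod.intCast_zmod_eq_zero_iff_dvd (a + 1) (r ^ e)).2
      (by exact_mod_cast hrp.pow_dvd_of_dvd_mul_left e h hdvd)
    push_cast at this
    linear_combination this
  · left
    have := (ZMod.intCast_zmod_eq_zero_iff_dvd (a - 1) (r ^ e)).2
      (by exact_mod_cast hrp.pow_dvd_of_dvd_mul_right e h hdvd)
    push_cast at this
    linear_combination this

theorem pow_eq_neg_one_iff_of_sq_eq_one {R : Type*} [Ring R]
    (hsq : ∀ y : R, y ^ 2 = 1 → y = 1 ∨ y = -1) (hR : (-1 : R) ≠ 1) (x : R) (i : ℕ) :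
    x ^ i = -1 ↔ orderOf x ∣ 2 * i ∧ ¬ orderOf x ∣ i := by
  rw [orderOf_dvd_iff_pow_eq_one, orderOf_dvd_iff_pow_eq_one, mul_comm, pow_mul]
  constructor
  · intro h
    rw [h]
    exact ⟨by simp, hR⟩
  · rintro ⟨h₁, h₂⟩
    exact (hsq _ h₁).resolve_left h₂

theorem ZMod.pow_eq_neg_one_iff_of_prime_pow {r e : ℕ} (hr : r.Prime) (hr2 : r ≠ 2) (he : e ≠ 0)
    (x : ZMod (r ^ e)) (i : ℕ) : x ^ i = -1 ↔ orderOf x ∣ 2 * i ∧ ¬ orderOf x ∣ i := by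
  have : Fact (2 < r ^ e) :=
    ⟨(lt_of_le_of_ne hr.two_le (Ne.symm hr2)).trans_le (Nat.le_self_pow he r)⟩
  exact pow_eq_neg_one_iff_of_sq_eq_one (fun _ => eq_one_or_eq_neg_one_of_sq_eq_one hr hr2)
    ZMod.neg_one_ne_one x i

theorem ZMod.pow_eq_neg_one_iff_of_two_pow {e : ℕ} (he : 2 ≤ e) (x : ZMod (2 ^ e)) (i : ℕ) :
    x ^ i = -1 ↔ x = -1 ∧ Odd i := by
  refine ⟨fun h => ?_, fun ⟨hx, hi⟩ => by rw [hx, hi.neg_one_pow]⟩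
  have hi : Odd i := by
    rw [← Nat.not_even_iff_odd]
    rintro ⟨j, rfl⟩
    have h4 : 4 ∣ 2 ^ e := pow_dvd_pow 2 he
    have := congrArg (ZMod.castHom h4 (ZMod 4)) h
    rw [← two_mul, pow_mul', map_pow, map_neg, map_one] at this
    exact (by decide : ∀ y : ZMod 4, y ^ 2 ≠ -1) _ this
  have hneg : (-x) ^ i = 1 := by rw [hi.neg_pow, h, neg_neg]
  obtain ⟨u, hu⟩ := IsUnit.of_pow_eq_one hneg hi.pos.ne'
  have htot : (-x) ^ Nat.totient (2 ^ e) = 1 := by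
    rw [← hu, ← Units.val_pow_eq_pow_val, ZMod.pow_totient, Units.val_one]
  have hcop : (Nat.totient (2 ^ e)).Coprime i := by
    rw [Nat.totient_prime_pow Nat.prime_two (by omega)]
    simpa using (Nat.coprime_two_left.2 hi).pow_left (e - 1)
  exact ⟨neg_eq_iff_eq_neg.1 ((pow_eq_one_iff_of_coprime hcop).1 ⟨htot, hneg⟩), hi⟩

section

variable {n p : ℕ}

theorem natCast_pow_eq_neg_one_iff (hn : n ≠ 0) (hcop : p.Coprime n) (i : ℕ) :
    (p : ZMod n) ^ i = -1 ↔
      (∀ r ∈ n.primeFactors.filter (· ≠ 2),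
        orderOf (p : ZMod (r ^ n.factorization r)) ∣ 2 * i ∧
          ¬ orderOf (p : ZMod (r ^ n.factorization r)) ∣ i) ∧
      (4 ∣ n → (p : ZMod (2 ^ n.factorization 2)) = -1 ∧ Odd i) := by
  have he (r) (hr : r ∈ n.primeFactors) : n.factorization r ≠ 0 :=
    Finsupp.mem_support_iff.1 (n.support_factorization ▸ hr)
  have h2 (h4 : 4 ∣ n) : 2 ∈ n.primeFactors :=
    Nat.mem_primeFactors.2 ⟨Nat.prime_two, (Nat.dvd_of_pow_dvd (k := 2) one_le_two h4), hn⟩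
  rw [← Nat.cast_pow, ZMod.natCast_eq_neg_one_iff_forall_primeFactors hn]
  simp only [Nat.cast_pow]
  constructor
  · intro h
    refine ⟨fun r hr => ?_, fun h4 => ?_⟩
    · obtain ⟨hr, hr2⟩ := Finset.mem_filter.1 hr
      exact (ZMod.pow_eq_neg_one_iff_of_prime_pow (Nat.prime_of_mem_primeFactors hr) hr2
        (he r hr) _ i).1 (h r hr)
    · exact (ZMod.pow_eq_neg_one_iff_of_two_pow
        ((Nat.four_dvd_iff_two_le_factorization hn).1 h4) _ i).1 (h 2 (h2 h4))
  · rintro ⟨hodd, h4⟩ r hr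
    by_cases hr2 : r = 2
    · subst hr2
      by_cases h4n : 4 ∣ n
      · exact (ZMod.pow_eq_neg_one_iff_of_two_pow
          ((Nat.four_dvd_iff_two_le_factorization hn).1 h4n) _ i).2 (h4 h4n)
      · have he2 : n.factorization 2 = 1 := by
          have := he 2 hr
          rw [Nat.four_dvd_iff_two_le_factorization hn] at h4n
          omega
        have hp : Odd p := Nat.coprime_two_right.1
          (hcop.coprime_dvd_right (Nat.dvd_of_mem_primeFactors hr))
        rw [he2, pow_one, ZMod.natCast_eq_one_iff_odd.2 hp, one_pow]
        decide
    · exact (ZMod.pow_eq_neg_one_iff_of_prime_pow (Nat.prime_of_mem_primeFactors hr) hr2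
        (he r hr) _ i).2 (hodd r (Finset.mem_filter.2 ⟨hr, hr2⟩))

theorem natCast_pow_lcm_eq_neg_one (hn : n ≠ 0) (hcop : p.Coprime n) {k : ℕ} (hk : 1 ≤ k)
    (hodd : ∀ r : ℕ, r.Prime → Odd r → r ∣ n →
      (orderOf (p : ZMod (r ^ n.factorization r))).factorization 2 = k)
    (h4 : 4 ∣ n → (p : ZMod (2 ^ n.factorization 2)) = -1 ∧ k = 1)
    (hS : (n.primeFactors.filter (· ≠ 2)).Nonempty) :
    (p : ZMod n) ^ ((n.primeFactors.filter (· ≠ 2)).lcm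
      fun r => orderOf (p : ZMod (r ^ n.factorization r)) / 2) = -1 := by
  set S := n.primeFactors.filter (· ≠ 2)
  set d := fun r => orderOf (p : ZMod (r ^ n.factorization r))
  have hd (r) (hr : r ∈ S) : (d r).factorization 2 = k := by
    obtain ⟨hrp, hro, hrn⟩ := (Nat.mem_primeFactors_filter_ne_two hn).1 hr
    exact hodd r hrp hro hrn
  have hd2 (r) (hr : r ∈ S) : 2 * (d r / 2) = d r :=
    Nat.mul_div_cancel' (Nat.dvd_of_factorization_pos (by rw [hd r hr]; omega))
  have hhalf0 (r) (hr : r ∈ S) : d r / 2 ≠ 0 := by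
    intro h0
    have := hd r hr
    rw [← hd2 r hr, h0, mul_zero, Nat.factorization_zero, Finsupp.zero_apply] at this
    omega
  have hhalf (r) (hr : r ∈ S) : (d r / 2).factorization 2 = k - 1 := by
    rw [Nat.factorization_div (Nat.dvd_of_factorization_pos (by rw [hd r hr]; omega)),
      Finsupp.tsub_apply, hd r hr, Nat.prime_two.factorization_self]
  set i := S.lcm fun r => d r / 2
  have hi0 : i ≠ 0 := Finset.lcm_ne_zero_iff.2 hhalf0
  have hi : i.factorization 2 = k - 1 := Finset.factorization_lcm_of_forall_eq hS hhalf0 hhalf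
  rw [natCast_pow_eq_neg_one_iff hn hcop]
  refine ⟨fun r hr => ⟨?_, ?_⟩, fun h4n => ⟨(h4 h4n).1, ?_⟩⟩
  · change d r ∣ 2 * i
    rw [← hd2 r hr]
    exact mul_dvd_mul_left 2 (Finset.dvd_lcm hr)
  · change ¬ d r ∣ i
    exact Nat.not_dvd_of_factorization_lt hi0 (by rw [hd r hr]; omega)
  · rw [Nat.odd_iff, ← Nat.two_dvd_ne_zero]
    intro h2
    have := Nat.Prime.factorization_pos_of_dvd Nat.prime_two hi0 h2
    have := (h4 h4n).2
    omega

theorem natCast_eq_neg_one_of_not_nonempty (hn : n ≠ 0) (hcop : p.Coprime n)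
    (hS : ¬ (n.primeFactors.filter (· ≠ 2)).Nonempty)
    (h4 : 4 ∣ n → (p : ZMod (2 ^ n.factorization 2)) = -1) : (p : ZMod n) = -1 := by
  rw [← pow_one (p : ZMod n), natCast_pow_eq_neg_one_iff hn hcop,
    Finset.not_nonempty_iff_eq_empty.1 hS]
  exact ⟨fun r hr => absurd hr (Finset.notMem_empty r), fun h4n => ⟨h4 h4n, odd_one⟩⟩

theorem criterion_of_natCast_pow_eq_neg_one (hn : n ≠ 0) (hcop : p.Coprime n) {i : ℕ}
    (hi : (p : ZMod n) ^ i = -1) :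
    ∃ k : ℕ, 1 ≤ k ∧
      (∀ r : ℕ, r.Prime → Odd r → r ∣ n →
        (orderOf (p : ZMod (r ^ n.factorization r))).factorization 2 = k) ∧
      (¬ 4 ∣ n → 2 ∣ n → (p : ZMod 2) = -1) ∧
      (4 ∣ n → (p : ZMod (2 ^ n.factorization 2)) = -1 ∧ k = 1) := by
  obtain ⟨hodd, h4⟩ := (natCast_pow_eq_neg_one_iff hn hcop i).1 hi
  refine ⟨i.factorization 2 + 1, by omega, fun r hr hro hrn => ?_, fun _ h2 => ?_,
    fun h4n => ⟨(h4 h4n).1, ?_⟩⟩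
  · obtain ⟨h₁, h₂⟩ := hodd r ((Nat.mem_primeFactors_filter_ne_two hn).2 ⟨hr, hro, hrn⟩)
    exact Nat.factorization_two_eq_succ_of_dvd_two_mul_of_not_dvd h₁ h₂
  · rw [ZMod.natCast_eq_one_iff_odd.2 (Nat.coprime_two_right.1 (hcop.coprime_dvd_right h2))]
    decide
  · simp [Nat.factorization_eq_zero_of_not_dvd (h4 h4n).2.not_two_dvd_nat]

end

/-- Criterion for `p^i ≡ -1 (mod n)`.  Write `n = ∏ r^{e_r}` and for each odd prime
`r ∣ n` let `d_r` be the multiplicative order of `p` mod `r^{e_r}`.  Then `p^i ≡ -1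
(mod n)` is solvable iff (i) the `d_r` are all even with the same 2-part `2^k ≥ 2`;
(ii) if `2 ∣ n` but `4 ∤ n` then `p ≡ -1 (mod 2)`; (iii) if `4 ∣ n` then
`p ≡ -1 (mod 2^{e_2})` and `k = 1`.  Moreover, when a solution exists,
`i = lcm { d_r / 2 : r odd prime dividing n }` works if `n` has an odd prime divisor,
and `i = 1` works otherwise. -/
theorem stmt7 (n p : ℕ) (hn : 1 ≤ n) (hcop : Nat.Coprime p n) :
    ((∃ i : ℕ, (p : ZMod n) ^ i = -1) ↔
      ∃ k : ℕ, 1 ≤ k ∧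
        (∀ r : ℕ, r.Prime → Odd r → r ∣ n →
          (orderOf (p : ZMod (r ^ (n.factorization r)))).factorization 2 = k) ∧
        (¬ (4 ∣ n) → 2 ∣ n → (p : ZMod 2) = -1) ∧
        (4 ∣ n → (p : ZMod (2 ^ (n.factorization 2))) = -1 ∧ k = 1)) ∧
    ((∃ i : ℕ, (p : ZMod n) ^ i = -1) →
      (((n.primeFactors.filter (fun r => r ≠ 2)).Nonempty →
        (p : ZMod n) ^ ((n.primeFactors.filter (fun r => r ≠ 2)).lcm
          (fun r => orderOf (p : ZMod (r ^ (n.factorization r))) / 2)) = -1) ∧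
      (¬ (n.primeFactors.filter (fun r => r ≠ 2)).Nonempty →
        (p : ZMod n) ^ 1 = -1))) := by
  have hn0 : n ≠ 0 := by omega
  refine ⟨⟨fun ⟨i, hi⟩ => criterion_of_natCast_pow_eq_neg_one hn0 hcop hi, ?_⟩, ?_⟩
  · rintro ⟨k, hk, hodd, -, h4⟩
    by_cases hS : (n.primeFactors.filter (· ≠ 2)).Nonempty
    · exact ⟨_, natCast_pow_lcm_eq_neg_one hn0 hcop hk hodd h4 hS⟩
    · exact ⟨1, (pow_one _).trans
        (natCast_eq_neg_one_of_not_nonempty hn0 hcop hS fun h4n => (h4 h4n).1)⟩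
  · rintro ⟨i, hi⟩
    obtain ⟨k, hk, hodd, -, h4⟩ := criterion_of_natCast_pow_eq_neg_one hn0 hcop hi
    exact ⟨natCast_pow_lcm_eq_neg_one hn0 hcop hk hodd h4, fun hS => (pow_one _).trans
      (natCast_eq_neg_one_of_not_nonempty hn0 hcop hS fun h4n => (h4 h4n).1)⟩
end

section
/- Let G be a finite group acting primitively on a finite set V with abelian (indeed cyclic) point stabilisers, and let K be the kernel of the action. Then either all point stabilisers are equal to K and G/K acts regularly on V with |V| prime, or distinct points have distinct stabilisers and G/K is a Frobenius group on V with K contained in the centre of G. -/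
/-!
Primitivity makes every point stabiliser a maximal subgroup.  If one stabiliser is normal, all
stabilisers coincide with the kernel `K`, and maximality of `K` leaves `G/K` without proper
nontrivial subgroups, so `|V| = |G : K|` is prime.  Otherwise every stabiliser is self-normalising,
which forces distinct points to have distinct stabilisers.  Two distinct maximal subgroups
generate `G`, and since both are abelian their intersection is centralised by all of `G`.  Being
central it is normal, hence lies in the kernel; as it also contains `K`, it equals `K`, and
`K` is central.
-/

open MulAction

/-- A group action is primitive if it is transitive and all its blocks are trivial. -/
def IsPrimitiveAction (G X : Type*) [Group G] [MulAction G X] : Prop :=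
  MulAction.IsPretransitive G X ∧
    ∀ B : Set X, MulAction.IsBlock G B → B.Subsingleton ∨ B = Set.univ

namespace Subgroup

variable {G : Type*} [Group G]

theorem normal_of_le_center {N : Subgroup G} (h : N ≤ center G) : N.Normal :=
  ⟨fun n hn g => by rwa [mem_center_iff.1 (h hn) g, mul_inv_cancel_right]⟩

theorem inf_le_center_of_sup_eq_top {A B : Subgroup G} [IsMulCommutative A]
    [IsMulCommutative B] (hAB : A ⊔ B = ⊤) : A ⊓ B ≤ center G := by
  have hA : A ≤ centralizer (A ⊓ B : Subgroup G) :=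
    (le_centralizer_iff_isMulCommutative.2 ‹_›).trans (centralizer_le inf_le_left)
  have hB : B ≤ centralizer (A ⊓ B : Subgroup G) :=
    (le_centralizer_iff_isMulCommutative.2 ‹_›).trans (centralizer_le inf_le_right)
  exact centralizer_eq_top_iff_subset.1 (top_le_iff.1 (hAB ▸ sup_le hA hB))

theorem prime_card_of_isSimpleOrder [IsSimpleOrder (Subgroup G)] : (Nat.card G).Prime := by
  have : Nontrivial G := nontrivial_iff.1 inferInstance
  obtain ⟨g, hg⟩ := exists_ne (1 : G)
  have hgen : zpowers g = ⊤ :=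
    (IsSimpleOrder.eq_bot_or_eq_top _).resolve_left (zpowers_ne_bot.2 hg)
  have : IsCyclic G := ⟨g, (eq_top_iff' _).1 hgen⟩
  let := IsCyclic.commGroup (α := G)
  have : IsSimpleGroup G := ⟨fun N _ => IsSimpleOrder.eq_bot_or_eq_top N⟩
  exact IsSimpleGroup.prime_card

theorem prime_index_of_isCoatom {N : Subgroup G} [N.Normal] (hN : IsCoatom N) : N.index.Prime :=
  have : IsSimpleOrder (Set.Ici N) := Set.isSimpleOrder_Ici_iff_isCoatom.2 hN
  have : IsSimpleOrder (Subgroup (G ⧸ N)) :=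
    OrderIso.isSimpleOrder (β := Set.Ici N) (QuotientGroup.comapMk'OrderIso N)
  prime_card_of_isSimpleOrder

end Subgroup

namespace MulAction

variable {G V : Type*} [Group G] [MulAction G V]

theorem mem_ker_toPermHom_iff {g : G} : g ∈ (toPermHom G V).ker ↔ ∀ v : V, g • v = v := by
  simp [MonoidHom.mem_ker, Equiv.ext_iff]

theorem ker_toPermHom_le_stabilizer (v : V) : (toPermHom G V).ker ≤ stabilizer G v :=
  fun _ hg => mem_ker_toPermHom_iff.1 hg v

theorem le_ker_toPermHom_of_normal [IsPretransitive G V] {N : Subgroup G} (hN : N.Normal)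
    {v : V} (h : N ≤ stabilizer G v) : N ≤ (toPermHom G V).ker := by
  refine fun n hn => mem_ker_toPermHom_iff.2 fun x => ?_
  obtain ⟨g, rfl⟩ := exists_smul_eq G v x
  have hconj : (g⁻¹ * n * g) • v = v := h (by simpa using hN.conj_mem n hn g⁻¹)
  calc n • g • v = g • (g⁻¹ * n * g) • v := by simp [smul_smul, mul_assoc]
    _ = g • v := by rw [hconj]

theorem stabilizer_eq_ker_of_normal [IsPretransitive G V] {v : V}
    (hv : (stabilizer G v).Normal) (w : V) : stabilizer G w = (toPermHom G V).ker := by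
  obtain ⟨g, rfl⟩ := exists_smul_eq G v w
  rw [stabilizer_smul_eq_stabilizer_map_conj, MulEquiv.toMonoidHom_eq_coe, hv.map_conj_eq]
  exact le_antisymm (le_ker_toPermHom_of_normal hv le_rfl) (ker_toPermHom_le_stabilizer v)

theorem eq_of_stabilizer_eq [IsPretransitive G V] {v w : V}
    (hv : Subgroup.normalizer (stabilizer G v : Set G) = stabilizer G v)
    (h : stabilizer G v = stabilizer G w) : v = w := by
  obtain ⟨g, rfl⟩ := exists_smul_eq G v w
  have hg : g ∈ Subgroup.normalizer (stabilizer G v : Set G) := by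
    rw [Subgroup.mem_normalizer_iff_map_conj_eq, ← MulEquiv.toMonoidHom_eq_coe,
      ← stabilizer_smul_eq_stabilizer_map_conj, h]
  rw [hv] at hg
  exact (mem_stabilizer_iff.1 hg).symm

section Preprimitive

variable [IsPreprimitive G V] [Nontrivial V]

theorem IsPreprimitive.normalizer_stabilizer_eq {v : V} (hv : ¬(stabilizer G v).Normal) :
    Subgroup.normalizer (stabilizer G v : Set G) = stabilizer G v :=
  (((IsPreprimitive.isCoatom_stabilizer_of_isPreprimitive G v).le_iff.1
    Subgroup.le_normalizer).resolve_left (hv ∘ Subgroup.normalizer_eq_top_iff.1))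

theorem IsPreprimitive.prime_card_of_normal_stabilizer {v : V} (hv : (stabilizer G v).Normal) :
    (Nat.card V).Prime := by
  rw [← index_stabilizer_of_transitive G v]
  exact Subgroup.prime_index_of_isCoatom
    (IsPreprimitive.isCoatom_stabilizer_of_isPreprimitive G v)

theorem IsPreprimitive.stabilizer_inf_stabilizer_le_center {v w : V}
    [IsMulCommutative (stabilizer G v)] [IsMulCommutative (stabilizer G w)]
    (h : stabilizer G v ≠ stabilizer G w) :
    stabilizer G v ⊓ stabilizer G w ≤ Subgroup.center G :=
  Subgroup.inf_le_center_of_sup_eq_top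
    ((IsPreprimitive.isCoatom_stabilizer_of_isPreprimitive G v).sup_eq_top_of_ne
      (IsPreprimitive.isCoatom_stabilizer_of_isPreprimitive G w) h)

end Preprimitive

end MulAction

theorem IsPrimitiveAction.isPreprimitive {G V : Type*} [Group G] [MulAction G V]
    (h : IsPrimitiveAction G V) : IsPreprimitive G V :=
  { toIsPretransitive := h.1, isTrivialBlock_of_isBlock := h.2 _ }

theorem stmt11_general (G V : Type*) [Group G] [MulAction G V]
    [Nontrivial V]
    (hprim : IsPrimitiveAction G V)
    (hcyc : ∀ v : V, IsCyclic (stabilizer G v))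
    (K : Subgroup G) (hK : K = (MulAction.toPermHom G V).ker) :
    ((∀ v : V, stabilizer G v = K) ∧ (Nat.card V).Prime) ∨
    ((∀ v w : V, v ≠ w → stabilizer G v ≠ stabilizer G w) ∧
      (∀ v w : V, v ≠ w → stabilizer G v ⊓ stabilizer G w = K) ∧
      (∃ v : V, K < stabilizer G v) ∧
      K ≤ Subgroup.center G) := by
  have := hprim.isPreprimitive
  have hcomm (v : V) : IsMulCommutative (stabilizer G v) := IsCyclic.isMulCommutative
  subst hK
  by_cases hnormal : ∃ v : V, (stabilizer G v).Normal
  · obtain ⟨v, hv⟩ := hnormal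
    exact .inl ⟨stabilizer_eq_ker_of_normal hv,
      IsPreprimitive.prime_card_of_normal_stabilizer hv⟩
  push Not at hnormal
  have hinj (v w : V) (hvw : v ≠ w) : stabilizer G v ≠ stabilizer G w := fun h =>
    hvw (eq_of_stabilizer_eq (IsPreprimitive.normalizer_stabilizer_eq (hnormal v)) h)
  have hcenter (v w : V) (hvw : v ≠ w) :
      stabilizer G v ⊓ stabilizer G w ≤ Subgroup.center G :=
    IsPreprimitive.stabilizer_inf_stabilizer_le_center (hinj v w hvw)
  have hinf (v w : V) (hvw : v ≠ w) : stabilizer G v ⊓ stabilizer G w = (toPermHom G V).ker :=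
    le_antisymm (le_ker_toPermHom_of_normal (Subgroup.normal_of_le_center (hcenter v w hvw))
      inf_le_left) (le_inf (ker_toPermHom_le_stabilizer v) (ker_toPermHom_le_stabilizer w))
  obtain ⟨v, w, hvw⟩ := exists_pair_ne V
  refine .inr ⟨hinj, hinf, ⟨v, (ker_toPermHom_le_stabilizer v).lt_of_ne ?_⟩, ?_⟩
  · exact fun h => hnormal v (h ▸ MonoidHom.normal_ker _)
  · exact (hinf v w hvw).symm.le.trans (hcenter v w hvw)

/-- Let `G` be a finite group acting primitively on `V` with cyclic point stabilisers, and
let `K` be the kernel of the action.  Then either all point stabilisers equal `K`, `G/K`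
acts regularly on `V` and `|V|` is prime, or distinct points have distinct stabilisers,
the stabiliser of any two distinct points is `K` (so `G/K` is a Frobenius group on `V`,
it being non-regular since some stabiliser exceeds `K`), and `K` is contained in the
centre of `G`. -/
theorem stmt11 (G V : Type*) [Group G] [Finite G] [MulAction G V] [Finite V]
    [Nontrivial V]
    (hprim : IsPrimitiveAction G V)
    (hcyc : ∀ v : V, IsCyclic (stabilizer G v))
    (K : Subgroup G) (hK : K = (MulAction.toPermHom G V).ker) :
    ((∀ v : V, stabilizer G v = K) ∧ (Nat.card V).Prime) ∨
    ((∀ v w : V, v ≠ w → stabilizer G v ≠ stabilizer G w) ∧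
      (∀ v w : V, v ≠ w → stabilizer G v ⊓ stabilizer G w = K) ∧
      (∃ v : V, K < stabilizer G v) ∧
      K ≤ Subgroup.center G) :=
  stmt11_general G V hprim hcyc K hK
end

section
/- Let G ≤ AGL_1(q) be a primitive subgroup containing the translation group T, with point stabiliser S ≤ F_q^* of order n, and let x be a generator of the cyclic group S. Then for every y ∈ G \ S, the pair {x, y} generates G. -/
open MulAction

/- The `H`-orbit of `a` is a block since `H` contains the stabiliser of `a`; it is not a
singleton because `g` moves `a`, so primitivity makes it all of `X`. -/
theorem IsPrimitiveAction.eq_top_of_stabilizer_le {G X : Type*} [Group G] [MulAction G X]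
    (hprim : IsPrimitiveAction G X) {H : Subgroup G} {a : X} (hH : stabilizer G a ≤ H)
    {g : G} (hgH : g ∈ H) (hg : g ∉ stabilizer G a) : H = ⊤ := by
  rcases hprim.2 _ (IsBlock.of_orbit hH) with hsub | huniv
  · exact absurd (hsub ⟨⟨g, hgH⟩, rfl⟩ (mem_orbit_self a)) hg
  · rw [← stabilizer_orbit_eq hH, huniv]
    ext k
    simp

theorem stmt14_general
    (F : Type*) [Field F]
    (G : Subgroup (Equiv.Perm F))
    (hprim : IsPrimitiveAction ↥G F)
    (x : ↥G) (hx : Subgroup.zpowers x = stabilizer ↥G (0 : F)) :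
    ∀ y : ↥G, y ∉ stabilizer ↥G (0 : F) →
      Subgroup.closure ({x, y} : Set ↥G) = ⊤ := by
  intro y hy
  have hstab : stabilizer ↥G (0 : F) ≤ Subgroup.closure {x, y} := by
    rw [← hx, Subgroup.zpowers_le]
    exact Subgroup.subset_closure (Set.mem_insert x {y})
  exact hprim.eq_top_of_stabilizer_le hstab
    (Subgroup.subset_closure (Set.mem_insert_of_mem x rfl)) hy

/-- Let `G ≤ AGL₁(q)` be primitive on `F_q` and contain all translations, with (cyclic)
point stabiliser `S` of `0` generated by `x`.  Then for every `y ∈ G \ S`, the pair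
`{x, y}` generates `G`. -/
theorem stmt14 (p d : ℕ) (hp : p.Prime) (hd : 0 < d)
    (F : Type*) [Field F] [Fintype F] (hF : Fintype.card F = p ^ d)
    (G : Subgroup (Equiv.Perm F))
    (hAGL : ∀ σ ∈ G, ∃ a : F, a ≠ 0 ∧ ∃ b : F, ∀ t : F, σ t = a * t + b)
    (hT : ∀ b : F, Equiv.addLeft b ∈ G)
    (hprim : IsPrimitiveAction ↥G F)
    (x : ↥G) (hx : Subgroup.zpowers x = stabilizer ↥G (0 : F)) :
    ∀ y : ↥G, y ∉ stabilizer ↥G (0 : F) →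
      Subgroup.closure ({x, y} : Set ↥G) = ⊤ :=
  stmt14_general F G hprim x hx
end

section
/- In the group G = ⟨x, y | x^7 = 1, relations of CH70.8⟩ defined as G = C_29 ⋊ C_7 with x of order 7, t of order 29, and t^x = t^r for r ∈ (Z/29)^* of order 7: the relation x^{-1} t^{-1} x^2 t x^{-1} t = 1 (arising from the presentation via y = x^{-1} t) holds if and only if -r + r^{-1} + 1 = 0 in F_29, if and only if r = -5 (mod 29). -/
/-! Conjugation by `x` acts on `⟨t⟩` as `t ↦ t ^ r`, so conjugation by `x⁻¹` acts as `t ↦ t ^ s`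
with `s = r⁻¹` in `ZMod (orderOf t)`. Grouping the word as `(x⁻¹ t⁻¹ x) (x t x⁻¹) t` turns it into
`t ^ (-r + s + 1)`, which is trivial iff `-r + r⁻¹ + 1 = 0`. Over `F₂₉` this says `r² = r + 1`,
whose roots are `-5` and `6`; only `-5` has order `7`. -/

section Conjugation

variable {G : Type*} [Group G] {x t : G} {r n : ℕ}

theorem pow_eq_pow_iff_natCast_eq (ht : orderOf t = n) {a b : ℕ} :
    t ^ a = t ^ b ↔ (a : ZMod n) = b := by
  rw [pow_eq_pow_iff_modEq, ht, ZMod.natCast_eq_natCast_iff]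

theorem mul_mul_inv_eq_pow_of_inv_mul_mul_eq_pow (hconj : x⁻¹ * t * x = t ^ r)
    (ht : orderOf t = n) {s : ℕ} (hrs : (r * s : ZMod n) = 1) : x * t * x⁻¹ = t ^ s := by
  have hs : x⁻¹ * t ^ s * x = t := calc
    _ = (x⁻¹ * t * x) ^ s := by simpa using (conj_pow (a := x⁻¹) (b := t) (i := s)).symm
    _ = t ^ (r * s) := by rw [hconj, pow_mul]
    _ = t ^ 1 := (pow_eq_pow_iff_natCast_eq ht).2 (by exact_mod_cast hrs)
    _ = t := pow_one t
  calc x * t * x⁻¹ = x * (x⁻¹ * t ^ s * x) * x⁻¹ := by rw [hs]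
    _ = t ^ s := by group

theorem relator_eq_one_iff (hconj : x⁻¹ * t * x = t ^ r) (ht : orderOf t = n) {s : ℕ}
    (hrs : (r * s : ZMod n) = 1) :
    x⁻¹ * t⁻¹ * x ^ 2 * t * x⁻¹ * t = 1 ↔ (s + 1 : ZMod n) = r := by
  have hword : x⁻¹ * t⁻¹ * x ^ 2 * t * x⁻¹ * t = (t ^ r)⁻¹ * t ^ (s + 1) := calc
    _ = (x⁻¹ * t * x)⁻¹ * (x * t * x⁻¹) * t := by simp only [sq, mul_inv_rev, inv_inv, mul_assoc]
    _ = (t ^ r)⁻¹ * t ^ (s + 1) := by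
      rw [hconj, mul_mul_inv_eq_pow_of_inv_mul_mul_eq_pow hconj ht hrs, mul_assoc, ← pow_succ]
  rw [hword, inv_mul_eq_one, eq_comm, pow_eq_pow_iff_natCast_eq ht]
  push_cast
  rfl

end Conjugation

theorem neg_add_inv_add_one_eq_zero_iff_sq {K : Type*} [Field K] {a : K} (ha : a ≠ 0) :
    -a + a⁻¹ + 1 = 0 ↔ a ^ 2 = a + 1 := by
  constructor <;> intro h
  · linear_combination (-a) * h + mul_inv_cancel₀ ha
  · linear_combination (-a⁻¹) * h + (a - 1) * mul_inv_cancel₀ ha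

theorem ZMod29.sq_eq_add_one_iff_of_pow_seven_eq_one (a : ZMod 29) (ha : a ^ 7 = 1) :
    a ^ 2 = a + 1 ↔ a = -5 := by
  revert a
  decide

theorem stmt18_general (G : Type*) [Group G] (x t : G) (r : ℕ)
    (ht : orderOf t = 29)
    (hr : orderOf (r : ZMod 29) = 7)
    (hconj : x⁻¹ * t * x = t ^ r) :
    (x⁻¹ * t⁻¹ * x ^ 2 * t * x⁻¹ * t = 1 ↔
      -(r : ZMod 29) + (r : ZMod 29)⁻¹ + 1 = 0) ∧
    (-(r : ZMod 29) + (r : ZMod 29)⁻¹ + 1 = 0 ↔ (r : ZMod 29) = -5) := by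
  have : Fact (Nat.Prime 29) := ⟨by norm_num⟩
  have h7 : (r : ZMod 29) ^ 7 = 1 := hr ▸ pow_orderOf_eq_one _
  have h0 : (r : ZMod 29) ≠ 0 := by
    rintro h
    simp [h] at h7
  have hs : (((r : ZMod 29)⁻¹).val : ZMod 29) = (r : ZMod 29)⁻¹ := ZMod.natCast_zmod_val _
  refine ⟨?_, (neg_add_inv_add_one_eq_zero_iff_sq h0).trans
    (ZMod29.sq_eq_add_one_iff_of_pow_seven_eq_one _ h7)⟩
  rw [relator_eq_one_iff hconj ht (by rw [hs, mul_inv_cancel₀ h0]), hs]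
  constructor <;> intro h <;> linear_combination h

/-- In the metacyclic group `G = C₂₉ ⋊ C₇` with `x` of order `7`, `t` of order `29`, and
`x⁻¹ t x = t^r` where `r` has multiplicative order `7` mod `29`: the relation
`x⁻¹ t⁻¹ x² t x⁻¹ t = 1` (from the presentation CH70.8, via `y = x⁻¹ t`) holds iff
`-r + r⁻¹ + 1 = 0` in `F₂₉`, iff `r ≡ -5 (mod 29)`. -/
theorem stmt18 (G : Type*) [Group G] (x t : G) (r : ℕ)
    (hx : orderOf x = 7) (ht : orderOf t = 29)
    (hr : orderOf (r : ZMod 29) = 7)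
    (hconj : x⁻¹ * t * x = t ^ r) :
    (x⁻¹ * t⁻¹ * x ^ 2 * t * x⁻¹ * t = 1 ↔
      -(r : ZMod 29) + (r : ZMod 29)⁻¹ + 1 = 0) ∧
    (-(r : ZMod 29) + (r : ZMod 29)⁻¹ + 1 = 0 ↔ (r : ZMod 29) = -5) :=
  stmt18_general G x t r ht hr hconj
end
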